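/- Let N = (Q, s, δ, F) be't an NFA (over a finite linearly ordered alphabet Σ, single initial state s, every state reachable from s and every state able to reach a final state) and let ≤ be a co-lex order on N. If u < v, then for every α ∈ I_u and every β ∈ I_v such that not both α and β belong to I_u ∩ I_v, it holds α ≺ β (strict co-lex order on words). -/

import Mathlib

/-- Strict co-lexicographic order on words: compare reversed words lexicographically. -/
def colexLt {A : Type} [LinearOrder A] (α β : List A) : Prop :=
  List.Lex (· < ·) α.reverse β.reverse

/-- Co-lexicographic order (reflexive version). -/
def colexLe {A : Type} [LinearOrder A] (α β : List A) : Prop :=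
  colexLt α β ∨ α = β

/-- The prefix closure of a language. -/
def Pref {A : Type} (L : Set (List A)) : Set (List A) :=
  {α | ∃ γ : List A, α ++ γ ∈ L}

/-- The Myhill–Nerode equivalence of a language. -/
def NerodeEq {A : Type} (L : Set (List A)) (α β : List A) : Prop :=
  ∀ γ : List A, α ++ γ ∈ L ↔ β ++ γ ∈ L

/-- A monotone (nondecreasing or nonincreasing) sequence of words w.r.t. co-lex order. -/
def MonotoneSeq {A : Type} [LinearOrder A] (α : ℕ → List A) : Prop :=
  (∀ i, colexLe (α i) (α (i + 1))) ∨ (∀ i, colexLe (α (i + 1)) (α i))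

/-- A partition of the state set into `p` chains with respect to the relation `le`. -/
def IsChainPartition {Q : Type} (le : Q → Q → Prop) (p : ℕ) (f : Fin p → Set Q) : Prop :=
  (∀ q : Q, ∃! i : Fin p, q ∈ f i) ∧
  ∀ i : Fin p, ∀ u ∈ f i, ∀ v ∈ f i, le u v ∨ le v u

/-- A nondeterministic finite automaton with a single initial state. -/
structure NFA' (A Q : Type) where
  start : Q
  delta : Q → A → Set Q
  accept : Set Q

namespace NFA'

variable {A Q : Type}

/-- Extended transition function on words. -/
def deltaStar (N : NFA' A Q) : Q → List A → Set Q
  | q, [] => {q}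
  | q, a :: w => ⋃ r ∈ N.delta q a, N.deltaStar r w

/-- `N.Iw α` is the set of states reached from the initial state reading `α`. -/
def Iw (N : NFA' A Q) (α : List A) : Set Q :=
  N.deltaStar N.start α

/-- `N.Iq q` is the set of words reaching `q` from the initial state. -/
def Iq (N : NFA' A Q) (q : Q) : Set (List A) :=
  {α | q ∈ N.Iw α}

/-- The accepted language. -/
def lang (N : NFA' A Q) : Set (List A) :=
  {α | ∃ q ∈ N.accept, q ∈ N.Iw α}

/-- Labels of transitions entering a state, with the extra bottom symbol `#`
added exactly for the initial state. -/
def lam (N : NFA' A Q) (q : Q) : Set (WithBot A) :=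
  {x | ∃ (a : A) (u : Q), x = (a : WithBot A) ∧ q ∈ N.delta u a} ∪
    {x | q = N.start ∧ x = (⊥ : WithBot A)}

/-- Every state is reachable from the initial state. -/
def Reachable (N : NFA' A Q) : Prop :=
  ∀ q : Q, ∃ α : List A, q ∈ N.Iw α

/-- Every state can reach a final state. -/
def Useful (N : NFA' A Q) : Prop :=
  ∀ q : Q, ∃ (β : List A) (f : Q), f ∈ N.accept ∧ f ∈ N.deltaStar q β

end NFA'

/-- A co-lex order on an NFA: a partial order on the states satisfying Axioms 1 and 2. -/
structure IsColexNFA {A Q : Type} [LinearOrder A] (N : NFA' A Q) (le : Q → Q → Prop) : Prop where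
  refl : ∀ u, le u u
  antisymm : ∀ u v, le u v → le v u → u = v
  trans : ∀ u v w, le u v → le v w → le u w
  ax1 : ∀ u v, le u v → u ≠ v → ∀ a ∈ N.lam u, ∀ b ∈ N.lam v, a ≤ b
  ax2 : ∀ (a : A) (u v u' v' : Q),
      u ∈ N.delta u' a → v ∈ N.delta v' a → le u v → u ≠ v → le u' v'

/-!
Reading a pair of words `α ∈ I_u`, `β ∈ I_v` with `u < v` from the right, Axiom 1 forces the last
letter of `α` to be at most the last letter of `β`. If they differ we are done; if they agree,
Axiom 2 carries `u < v` back to the predecessor states, and we recurse on the shorter words. The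
recursion can only stop at `u = v` (impossible: then both words lie in `I_u ∩ I_v`), at `α = []`
(then `α ≺ β`), or at `β = []`, where `v = s` and the label `#` of `s` contradicts Axiom 1.
-/

section Colex

variable {A : Type} [LinearOrder A]

theorem colexLt_nil_append_singleton (β : List A) (b : A) : colexLt [] (β ++ [b]) := by
  simp [colexLt]

theorem colexLt_append_singleton_of_lt (α β : List A) {a b : A} (hab : a < b) :
    colexLt (α ++ [a]) (β ++ [b]) := by
  simpa [colexLt] using List.Lex.rel hab

theorem colexLt.append_singleton {α β : List A} (h : colexLt α β) (a : A) :
    colexLt (α ++ [a]) (β ++ [a]) := by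
  simp only [colexLt, List.reverse_append, List.reverse_singleton, List.singleton_append]
  exact List.Lex.cons h

end Colex

namespace NFA'

variable {A Q : Type} (N : NFA' A Q)

theorem deltaStar_append_singleton (q : Q) (γ : List A) (a : A) :
    N.deltaStar q (γ ++ [a]) = ⋃ p ∈ N.deltaStar q γ, N.delta p a := by
  induction γ generalizing q with
  | nil => simp [deltaStar]
  | cons c γ ih =>
    simp only [List.cons_append, deltaStar, ih, Set.biUnion_iUnion]

theorem mem_Iq_append_singleton {q : Q} {γ : List A} {a : A} :
    γ ++ [a] ∈ N.Iq q ↔ ∃ p, γ ∈ N.Iq p ∧ q ∈ N.delta p a := by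
  simp [Iq, Iw, deltaStar_append_singleton]

theorem append_singleton_mem_Iq {p q : Q} {γ : List A} {a : A} (hγ : γ ∈ N.Iq p)
    (hq : q ∈ N.delta p a) : γ ++ [a] ∈ N.Iq q :=
  N.mem_Iq_append_singleton.2 ⟨p, hγ, hq⟩

end NFA'

namespace IsColexNFA

variable {A Q : Type} [LinearOrder A] {N : NFA' A Q} {le : Q → Q → Prop}

theorem label_le (hcolex : IsColexNFA N le) {u v u' v' : Q} {a b : A} (huv : le u v)
    (hne : u ≠ v) (hu : u ∈ N.delta u' a) (hv : v ∈ N.delta v' b) : a ≤ b :=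
  WithBot.coe_le_coe.1 <|
    hcolex.ax1 u v huv hne _ (Or.inl ⟨a, u', rfl, hu⟩) _ (Or.inl ⟨b, v', rfl, hv⟩)

theorem ne_start (hcolex : IsColexNFA N le) {u v u' : Q} {a : A} (huv : le u v) (hne : u ≠ v)
    (hu : u ∈ N.delta u' a) : v ≠ N.start := fun hv =>
  WithBot.not_coe_le_bot a <|
    hcolex.ax1 u v huv hne _ (Or.inl ⟨a, u', rfl, hu⟩) _ (Or.inr ⟨hv, rfl⟩)

theorem colexLt_of_mem_Iq (hcolex : IsColexNFA N le) {α β : List A} {u v : Q} (huv : le u v)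
    (hne : u ≠ v) (hα : α ∈ N.Iq u) (hβ : β ∈ N.Iq v)
    (hcross : ¬(α ∈ N.Iq v ∧ β ∈ N.Iq u)) : colexLt α β := by
  induction α using List.reverseRecOn generalizing β u v with
  | nil =>
    rcases List.eq_nil_or_concat' β with rfl | ⟨β', b, rfl⟩
    · exact absurd (hα.trans hβ.symm) hne
    · exact colexLt_nil_append_singleton β' b
  | append_singleton α' a ih =>
    obtain ⟨u', hα', hu⟩ := N.mem_Iq_append_singleton.1 hα
    rcases List.eq_nil_or_concat' β with rfl | ⟨β', b, rfl⟩
    · exact absurd hβ (hcolex.ne_start huv hne hu)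
    obtain ⟨v', hβ', hv⟩ := N.mem_Iq_append_singleton.1 hβ
    rcases (hcolex.label_le huv hne hu hv).lt_or_eq with hab | rfl
    · exact colexLt_append_singleton_of_lt α' β' hab
    have hcross' : ¬(α' ∈ N.Iq v' ∧ β' ∈ N.Iq u') := fun h =>
      hcross ⟨N.append_singleton_mem_Iq h.1 hv, N.append_singleton_mem_Iq h.2 hu⟩
    have hne' : u' ≠ v' := by
      rintro rfl
      exact hcross' ⟨hα', hβ'⟩
    exact (ih (hcolex.ax2 a u v u' v' hu hv huv hne) hne' hα' hβ' hcross').append_singleton a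

end IsColexNFA

theorem stmt_2_general {A Q : Type} [LinearOrder A]
    (N : NFA' A Q)
    (le : Q → Q → Prop) (hcolex : IsColexNFA N le)
    (u v : Q) (huv : le u v) (hne : u ≠ v) :
    ∀ α ∈ N.Iq u, ∀ β ∈ N.Iq v,
      ¬(α ∈ N.Iq u ∩ N.Iq v ∧ β ∈ N.Iq u ∩ N.Iq v) → colexLt α β := by
  intro α hα β hβ hnot
  exact hcolex.colexLt_of_mem_Iq huv hne hα hβ fun h => hnot ⟨⟨hα, h.1⟩, h.2, hβ⟩

/-- for any co-lex order on an NFA, if `u < v` then `α ≺ β` for all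
`α ∈ I_u`, `β ∈ I_v` such that not both `α` and `β` belong to `I_u ∩ I_v`. -/
theorem stmt_2 {A Q : Type} [LinearOrder A] [Fintype A] [Fintype Q]
    (N : NFA' A Q) (hreach : N.Reachable) (huse : N.Useful)
    (le : Q → Q → Prop) (hcolex : IsColexNFA N le)
    (u v : Q) (huv : le u v) (hne : u ≠ v) :
    ∀ α ∈ N.Iq u, ∀ β ∈ N.Iq v,
      ¬(α ∈ N.Iq u ∩ N.Iq v ∧ β ∈ N.Iq u ∩ N.Iq v) → colexLt α β :=
  stmt_2_general N le hcolex u v huv hne
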